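/- Suppose $f \colon 2^\omega \to 2^\omega$ satisfies $f(x) \geq_T x$ for all $x$, and suppose every relation $R \subseteq 2^\omega \times 2^\omega$ whose domain is cofinal in the Turing degrees and which is contained in Turing reducibility (i.e., $(x,y) \in R$ implies $y \leq_T x$) admits a computable choice function on the paths of some pointed perfect tree. Then there is a pointed perfect tree $T$ and a computable function $g \colon [T] \to 2^\omega$ such that $f(g(x)) = x$ for all $x \in [T]$. -/

import Mathlib

/-- `RecursiveIn g f` : the partial function `f : ℕ →. ℕ` is partial recursive
relative to the oracle `g : ℕ →. ℕ`.  This is the standard inductive definition,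
mirroring `Nat.Partrec` with an extra `oracle` constructor. -/
inductive RecursiveInOracle (g : ℕ →. ℕ) : (ℕ →. ℕ) → Prop
  | oracle : RecursiveInOracle g g
  | zero : RecursiveInOracle g (pure 0)
  | succ : RecursiveInOracle g ↑(Nat.succ)
  | left : RecursiveInOracle g ↑fun n : ℕ => n.unpair.1
  | right : RecursiveInOracle g ↑fun n : ℕ => n.unpair.2
  | pair {f h} : RecursiveInOracle g f → RecursiveInOracle g h →
      RecursiveInOracle g fun n => Nat.pair <$> f n <*> h n
  | comp {f h} : RecursiveInOracle g f → RecursiveInOracle g h →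
      RecursiveInOracle g fun n => h n >>= f
  | prec {f h} : RecursiveInOracle g f → RecursiveInOracle g h →
      RecursiveInOracle g (Nat.unpaired fun a n =>
        n.rec (f a) fun y IH => do let i ← IH; h (Nat.pair a (Nat.pair y i)))
  | rfind {f} : RecursiveInOracle g f →
      RecursiveInOracle g fun a => Nat.rfind fun n => (fun m => m = 0) <$> f (Nat.pair a n)

/-- View an element of Cantor space as an oracle `ℕ →. ℕ`. -/
def oracleOf (x : ℕ → Bool) : ℕ →. ℕ := fun n => Part.some (cond (x n) 1 0)

/-- Turing reducibility on Cantor space. -/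
def TuringLe (x y : ℕ → Bool) : Prop := RecursiveInOracle (oracleOf y) (oracleOf x)

/-- Turing equivalence on Cantor space. -/
def TuringEquiv (x y : ℕ → Bool) : Prop := TuringLe x y ∧ TuringLe y x

/-- A real is computable if it is reducible to the trivial oracle. -/
def ComputableReal (x : ℕ → Bool) : Prop := TuringLe x fun _ => false

/-- Turing join of two reals. -/
def tJoin (x y : ℕ → Bool) : ℕ → Bool :=
  fun n => if n % 2 = 0 then x (n / 2) else y (n / 2)

infixl:70 " ⊕ₜ " => tJoin

/-- The initial segment of length `n` of `x : ℕ → Bool`, as a finite binary string. -/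
def initSeg (x : ℕ → Bool) (n : ℕ) : List Bool := List.ofFn fun i : Fin n => x i

/-- A tree on `2^{<ω}` : a set of finite binary strings closed under prefixes. -/
def IsTree (T : Set (List Bool)) : Prop :=
  ∀ σ ∈ T, ∀ τ : List Bool, τ <+: σ → τ ∈ T

/-- A perfect tree: a nonempty tree in which every node has two incomparable extensions. -/
def IsPerfectTree (T : Set (List Bool)) : Prop :=
  IsTree T ∧ T.Nonempty ∧ ∀ σ ∈ T, ∃ τ₁ ∈ T, ∃ τ₂ ∈ T,
    σ <+: τ₁ ∧ σ <+: τ₂ ∧ ¬τ₁ <+: τ₂ ∧ ¬τ₂ <+: τ₁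

/-- The set of infinite paths through a tree. -/
def pathsThrough (T : Set (List Bool)) : Set (ℕ → Bool) :=
  { x | ∀ n, initSeg x n ∈ T }

open Classical in
/-- A coding of a tree `T ⊆ 2^{<ω}` as an element of Cantor space. -/
noncomputable def treeReal (T : Set (List Bool)) : ℕ → Bool :=
  fun n => if ∃ σ ∈ T, Encodable.encode σ = n then true else false

/-- A pointed perfect tree: a perfect tree each of whose paths computes the tree. -/
def IsPointedPerfectTree (T : Set (List Bool)) : Prop :=
  IsPerfectTree T ∧ ∀ x ∈ pathsThrough T, TuringLe (treeReal T) x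

/-- `ComputesOn φ F D` : the partial recursive function `φ` is (the string-level
part of) a Turing functional which is total on every oracle in `D` and computes
`F` there: for every `x ∈ D` and input `n`, some initial segment of `x` makes `φ`
converge to the value `F x n`, and every converging initial segment of `x` yields
that same value. -/
def ComputesOn (φ : ℕ →. ℕ) (F : (ℕ → Bool) → ℕ → Bool) (D : Set (ℕ → Bool)) : Prop :=
  Nat.Partrec φ ∧
  (∀ x ∈ D, ∀ n : ℕ, ∃ k : ℕ,
      φ (Nat.pair (Encodable.encode (initSeg x k)) n) = Part.some (cond (F x n) 1 0)) ∧
  (∀ x ∈ D, ∀ n k m : ℕ,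
      φ (Nat.pair (Encodable.encode (initSeg x k)) n) = Part.some m → m = cond (F x n) 1 0)

/-- If `f x ≥_T x` for all `x` and the computable
uniformization lemma holds, then `f` has a computable right inverse on the paths
of some pointed perfect tree. -/
theorem stmt18 (f : (ℕ → Bool) → ℕ → Bool) (hf : ∀ x, TuringLe x (f x))
    (huniform : ∀ R : (ℕ → Bool) → (ℕ → Bool) → Prop,
      (∀ a : ℕ → Bool, ∃ x, TuringLe a x ∧ ∃ y, R x y) →
      (∀ x y, R x y → TuringLe y x) →
      ∃ (T : Set (List Bool)) (g : (ℕ → Bool) → ℕ → Bool) (φ : ℕ →. ℕ),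
        IsPointedPerfectTree T ∧ ComputesOn φ g (pathsThrough T) ∧
        ∀ x ∈ pathsThrough T, R x (g x)) :
    ∃ (T : Set (List Bool)) (g : (ℕ → Bool) → ℕ → Bool) (φ : ℕ →. ℕ),
      IsPointedPerfectTree T ∧ ComputesOn φ g (pathsThrough T) ∧
      ∀ x ∈ pathsThrough T, f (g x) = x :=
  huniform (fun x y => f y = x) (fun a => ⟨f a, hf a, a, rfl⟩) fun _ y hfy => hfy ▸ hf y
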